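/- A beamformer with a nonzero component outside the channel subspace is strictly suboptimal whenever it delivers nonzero signal power: suppose w = (w_1, …, w_N) is power-feasible (Σ_n ‖w_n‖²_{L²(μ)} ≤ P_max), Q(w) ≠ 0, and P_K w_m ≠ w_m for some stream m. Then w is not a maximizer of the spectral efficiency: there exists a power-feasible beamformer w'' (namely the projected beamformer rescaled by t = √(P_max / Σ_n ‖P_K w_n‖²) > 1) with SE(w'') > SE(w). -/

import Mathlib

open MeasureTheory ComplexConjugate

noncomputable section

variable {α β : Type*} [MeasurableSpace α] [MeasurableSpace β]

/-- Effective received signal `e_w(r) = ∫_{S_B} h(r,s) w(s) dμ(s)`. -/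
def eSig (h : β → α → ℂ) (μ : Measure α) (w : Lp ℂ 2 μ) (r : β) : ℂ :=
  ∫ s, h r s * (w : α → ℂ) s ∂μ

/-- The closed linear span `K` of the conjugated channel sections
`{s ↦ conj (h r s) : r ∈ S_U, h(r,·) ∈ L²(μ)}` in `L²(μ; ℂ)`. -/
def chanSub (h : β → α → ℂ) (μ : Measure α) : Submodule ℂ (Lp ℂ 2 μ) :=
  (Submodule.span ℂ {f : Lp ℂ 2 μ |
    ∃ r : β, ∃ hr : MemLp (fun s => conj (h r s)) 2 μ,
      f = hr.toLp (fun s => conj (h r s))}).topologicalClosure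

instance (h : β → α → ℂ) (μ : Measure α) : CompleteSpace (chanSub h μ) :=
  (Submodule.isClosed_topologicalClosure _).completeSpace_coe

/-- The orthogonal projection `P_K` of `L²(μ; ℂ)` onto the channel subspace `K`. -/
def projK (h : β → α → ℂ) (μ : Measure α) (w : Lp ℂ 2 μ) : Lp ℂ 2 μ :=
  ((chanSub h μ).orthogonalProjectionOnto w : Lp ℂ 2 μ)

/-- Signal covariance matrix `Q(w)_{mn} = ∫ conj(e_{w_m}(r)) ⬝ e_{w_n}(r) dν(r)`. -/
def covQ (h : β → α → ℂ) (μ : Measure α) (ν : Measure β) {N : ℕ}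
    (w : Fin N → Lp ℂ 2 μ) : Matrix (Fin N) (Fin N) ℂ :=
  Matrix.of fun m n => ∫ r, conj (eSig h μ (w m) r) * eSig h μ (w n) r ∂ν

/-- Spectral efficiency `SE(w) = log det(I_N + σ⁻² Q(w))`. -/
def SE (h : β → α → ℂ) (μ : Measure α) (ν : Measure β) (σ2 : ℝ) {N : ℕ}
    (w : Fin N → Lp ℂ 2 μ) : ℝ :=
  Real.log ((1 + (σ2⁻¹ : ℂ) • covQ h μ ν w).det.re)

end

/-!
Since `e_w(r) = ⟪conj h(r,·), w⟫` and `conj h(r,·) ∈ K` for a.e. `r`, projecting every stream onto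
`K` leaves all received signals, hence `Q`, unchanged, while it strictly lowers the total power
because some stream has a nonzero component in `Kᗮ`. Rescaling the projected beamformer by `t`
with `t² = P_max / Σ_n ‖P_K w_n‖² > 1` uses the full power budget and turns `Q` into `t² Q`. As `Q`
is a nonzero Gram matrix, `det (I + c Q) = ∏ (1 + c λ_i)` with all `λ_i ≥ 0` and some `λ_i > 0`,
which is strictly increasing in `c ≥ 0`.
-/

open scoped ComplexOrder InnerProductSpace

namespace Matrix

variable {n 𝕜 : Type*} [Fintype n] [DecidableEq n] [RCLike 𝕜] {Q : Matrix n n 𝕜}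

lemma IsHermitian.det_one_add_smul (hQ : Q.IsHermitian) (c : ℝ) :
    (1 + (c : 𝕜) • Q).det = ∏ i, ((1 + c * hQ.eigenvalues i : ℝ) : 𝕜) := by
  have hdiag : 1 + (c : 𝕜) • diagonal (RCLike.ofReal ∘ hQ.eigenvalues) =
      diagonal (fun i => ((1 + c * hQ.eigenvalues i : ℝ) : 𝕜)) := by
    rw [← diagonal_one, ← diagonal_smul, diagonal_add]
    congr 1
    ext i
    simp
  conv_lhs => rw [hQ.spectral_theorem, ← map_one (Unitary.conjStarAlgAut 𝕜 _ _), ← map_smul,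
    ← map_add, hdiag, Unitary.conjStarAlgAut_apply,
    det_conj_of_mul_eq_one (Unitary.coe_mul_star_self _) (Unitary.coe_star_mul_self _),
    det_diagonal]

lemma PosSemidef.re_det_one_add_smul_pos (hQ : Q.PosSemidef) {a : ℝ} (ha : 0 ≤ a) :
    0 < RCLike.re (1 + (a : 𝕜) • Q).det := by
  rw [hQ.isHermitian.det_one_add_smul, ← RCLike.ofReal_prod, RCLike.ofReal_re]
  exact Finset.prod_pos fun i _ => by nlinarith [hQ.eigenvalues_nonneg i]

lemma PosSemidef.re_det_one_add_smul_lt (hQ : Q.PosSemidef) (hQ0 : Q ≠ 0) {a b : ℝ}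
    (ha : 0 ≤ a) (hab : a < b) :
    RCLike.re (1 + (a : 𝕜) • Q).det < RCLike.re (1 + (b : 𝕜) • Q).det := by
  have hev := hQ.eigenvalues_nonneg
  obtain ⟨i, hi⟩ : ∃ i, hQ.isHermitian.eigenvalues i ≠ 0 := by
    by_contra! h0
    exact hQ0 (hQ.isHermitian.eigenvalues_eq_zero_iff.mp (funext h0))
  simp only [hQ.isHermitian.det_one_add_smul, ← RCLike.ofReal_prod, RCLike.ofReal_re]
  refine Finset.prod_lt_prod (fun j _ => by nlinarith [hev j]) (fun j _ => by nlinarith [hev j])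
    ⟨i, Finset.mem_univ i, ?_⟩
  nlinarith [(hev i).lt_of_ne' hi]

lemma PosSemidef.strictMonoOn_log_re_det_one_add_smul (hQ : Q.PosSemidef) (hQ0 : Q ≠ 0) :
    StrictMonoOn (fun a : ℝ => Real.log (RCLike.re (1 + (a : 𝕜) • Q).det)) (Set.Ici 0) :=
  fun _ ha _ _ hab => Real.log_lt_log (hQ.re_det_one_add_smul_pos ha)
    (hQ.re_det_one_add_smul_lt hQ0 ha hab)

end Matrix

namespace MeasureTheory

variable {α β E : Type*} [MeasurableSpace α] [MeasurableSpace β] [NormedAddCommGroup E]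

lemma MemLp.norm_toLp_sq {μ : Measure α} {f : α → E} (hf : MemLp f 2 μ) :
    ‖hf.toLp f‖ ^ 2 = ∫ x, ‖f x‖ ^ 2 ∂μ := by
  rw [Lp.norm_toLp, toReal_eLpNorm hf.1, lpNorm_eq_integral_norm_rpow_toReal two_ne_zero
    ENNReal.ofNat_ne_top hf.1]
  simpa using Real.rpow_inv_natCast_pow (integral_nonneg fun x => by positivity) two_ne_zero

lemma MemLp.ae_memLp_prodMk_left {μ : Measure α} {ν : Measure β} [SFinite μ] [SFinite ν]
    {f : α × β → E} (hf : MemLp f 2 (μ.prod ν)) : ∀ᵐ x ∂μ, MemLp (fun y => f (x, y)) 2 ν := by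
  have hsq := (memLp_two_iff_integrable_sq_norm hf.1).mp hf
  filter_upwards [hf.1.prodMk_left, hsq.prod_right_ae] with x hmeas hint
  exact (memLp_two_iff_integrable_sq_norm hmeas).mpr hint

end MeasureTheory

section Channel

variable {α β : Type*} [MeasurableSpace α] {μ : Measure α} {h : β → α → ℂ}

lemma eSig_smul (c : ℂ) (u : Lp ℂ 2 μ) (r : β) : eSig h μ (c • u) r = c * eSig h μ u r := by
  rw [eSig, eSig, ← integral_const_mul]
  refine integral_congr_ae ?_
  filter_upwards [Lp.coeFn_smul c u] with s hs
  rw [hs, Pi.smul_apply, smul_eq_mul, mul_left_comm]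

lemma eSig_eq_inner {r : β} (hr : MemLp (fun s => conj (h r s)) 2 μ) (u : Lp ℂ 2 μ) :
    eSig h μ u r = ⟪hr.toLp (fun s => conj (h r s)), u⟫_ℂ := by
  rw [L2.inner_def]
  refine (integral_congr_ae ?_).symm
  filter_upwards [hr.coeFn_toLp] with s hs
  rw [RCLike.inner_apply, hs]
  simp [mul_comm]

lemma conj_section_mem_chanSub {r : β} (hr : MemLp (fun s => conj (h r s)) 2 μ) :
    hr.toLp (fun s => conj (h r s)) ∈ chanSub h μ :=
  Submodule.le_topologicalClosure _ (Submodule.subset_span ⟨r, hr, rfl⟩)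

lemma norm_projK_lt {u : Lp ℂ 2 μ} (hu : projK h μ u ≠ u) : ‖projK h μ u‖ < ‖u‖ :=
  ((chanSub h μ).norm_starProjection_apply_le u).lt_of_ne fun heq =>
    hu ((chanSub h μ).starProjection_eq_self_iff.mpr
      (((chanSub h μ).mem_iff_norm_starProjection u).mpr heq))

lemma sum_norm_sq_projK_lt {ι : Type*} [Fintype ι] {w : ι → Lp ℂ 2 μ}
    (hw : ∃ i, projK h μ (w i) ≠ w i) : ∑ i, ‖projK h μ (w i)‖ ^ 2 < ∑ i, ‖w i‖ ^ 2 := by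
  obtain ⟨i, hi⟩ := hw
  refine Finset.sum_lt_sum (fun j _ => ?_) ⟨i, Finset.mem_univ i, ?_⟩
  · gcongr
    exact (chanSub h μ).norm_starProjection_apply_le (w j)
  · gcongr
    exact norm_projK_lt hi

variable [MeasurableSpace β] {ν : Measure β}

lemma covQ_smul {N : ℕ} (c : ℂ) (w : Fin N → Lp ℂ 2 μ) :
    covQ h μ ν (fun n => c • w n) = ((‖c‖ ^ 2 : ℝ) : ℂ) • covQ h μ ν w := by
  ext m n
  simp only [covQ, Matrix.smul_apply, Matrix.of_apply, smul_eq_mul, eSig_smul,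
    ← integral_const_mul]
  congr 1
  funext r
  rw [map_mul, Complex.ofReal_pow, ← Complex.conj_mul']
  ring

lemma SE_lt_SE_of_covQ_eq_smul {σ2 : ℝ} (hσ2 : 0 < σ2) {N : ℕ} {w w' : Fin N → Lp ℂ 2 μ}
    (hQ : (covQ h μ ν w).PosSemidef) (hQ0 : covQ h μ ν w ≠ 0) {c : ℝ} (hc : 1 < c)
    (hw' : covQ h μ ν w' = (c : ℂ) • covQ h μ ν w) : SE h μ ν σ2 w < SE h μ ν σ2 w' := by
  have hσ2c : σ2⁻¹ < σ2⁻¹ * c := lt_mul_of_one_lt_right (inv_pos.2 hσ2) hc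
  have key := hQ.strictMonoOn_log_re_det_one_add_smul hQ0 (Set.mem_Ici.2 (inv_pos.2 hσ2).le)
    (Set.mem_Ici.2 ((inv_pos.2 hσ2).le.trans hσ2c.le)) hσ2c
  rw [SE, SE, hw', smul_smul]
  simpa using key

variable [SigmaFinite μ] [SigmaFinite ν]

lemma ae_memLp_conj_section (hL2 : MemLp (Function.uncurry h) 2 (ν.prod μ)) :
    ∀ᵐ r ∂ν, MemLp (fun s => conj (h r s)) 2 μ :=
  hL2.ae_memLp_prodMk_left.mono fun _ hr => hr.star

lemma memLp_eSig (hL2 : MemLp (Function.uncurry h) 2 (ν.prod μ)) (u : Lp ℂ 2 μ) :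
    MemLp (eSig h μ u) 2 ν := by
  have hmeas : AEStronglyMeasurable (eSig h μ u) ν :=
    (hL2.1.mul (Lp.aestronglyMeasurable u).comp_snd).integral_prod_right'
  have hG : Integrable (fun r => ∫ s, ‖h r s‖ ^ 2 ∂μ) ν :=
    ((memLp_two_iff_integrable_sq_norm hL2.1).mp hL2).integral_prod_left
  refine (memLp_two_iff_integrable_sq_norm hmeas).mpr <|
    (hG.const_mul (‖u‖ ^ 2)).mono' (hmeas.norm.pow 2) ?_
  filter_upwards [ae_memLp_conj_section hL2] with r hr
  calc ‖‖eSig h μ u r‖ ^ 2‖ = ‖⟪hr.toLp (fun s => conj (h r s)), u⟫_ℂ‖ ^ 2 := by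
        rw [norm_pow, norm_norm, eSig_eq_inner hr]
    _ ≤ (‖hr.toLp (fun s => conj (h r s))‖ * ‖u‖) ^ 2 := by
        gcongr; exact norm_inner_le_norm _ _
    _ = ‖u‖ ^ 2 * ∫ s, ‖h r s‖ ^ 2 ∂μ := by
        rw [mul_pow, hr.norm_toLp_sq, mul_comm]; simp

lemma covQ_eq_gram (hL2 : MemLp (Function.uncurry h) 2 (ν.prod μ)) {N : ℕ}
    (w : Fin N → Lp ℂ 2 μ) :
    covQ h μ ν w = Matrix.gram ℂ fun n => (memLp_eSig hL2 (w n)).toLp (eSig h μ (w n)) := by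
  ext m n
  refine integral_congr_ae ?_
  filter_upwards [(memLp_eSig hL2 (w m)).coeFn_toLp, (memLp_eSig hL2 (w n)).coeFn_toLp]
    with r hm hn
  rw [RCLike.inner_apply, hm, hn, mul_comm]

lemma posSemidef_covQ (hL2 : MemLp (Function.uncurry h) 2 (ν.prod μ)) {N : ℕ}
    (w : Fin N → Lp ℂ 2 μ) : (covQ h μ ν w).PosSemidef := by
  rw [covQ_eq_gram hL2]
  exact Matrix.posSemidef_gram ℂ _

lemma eSig_projK_ae (hL2 : MemLp (Function.uncurry h) 2 (ν.prod μ)) (u : Lp ℂ 2 μ) :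
    ∀ᵐ r ∂ν, eSig h μ (projK h μ u) r = eSig h μ u r := by
  filter_upwards [ae_memLp_conj_section hL2] with r hr
  rw [eSig_eq_inner hr, eSig_eq_inner hr, eq_comm, ← sub_eq_zero, ← inner_sub_right]
  exact Submodule.inner_right_of_mem_orthogonal (conj_section_mem_chanSub hr)
    ((chanSub h μ).sub_starProjection_mem_orthogonal u)

lemma covQ_projK (hL2 : MemLp (Function.uncurry h) 2 (ν.prod μ)) {N : ℕ}
    (w : Fin N → Lp ℂ 2 μ) : covQ h μ ν (fun n => projK h μ (w n)) = covQ h μ ν w := by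
  ext m n
  refine integral_congr_ae ?_
  filter_upwards [eSig_projK_ae hL2 (w m), eSig_projK_ae hL2 (w n)] with r hm hn
  rw [hm, hn]

lemma sum_norm_sq_projK_pos (hL2 : MemLp (Function.uncurry h) 2 (ν.prod μ)) {N : ℕ}
    {w : Fin N → Lp ℂ 2 μ} (hQ0 : covQ h μ ν w ≠ 0) : 0 < ∑ n, ‖projK h μ (w n)‖ ^ 2 := by
  refine (Finset.sum_nonneg fun n _ => sq_nonneg _).lt_of_ne fun hzero => hQ0 ?_
  -- `P_K w = 0`, written as `0 • P_K w` so that `covQ_smul` applies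
  have hP : (fun n => projK h μ (w n)) = fun n => (0 : ℂ) • projK h μ (w n) := by
    funext n
    rw [zero_smul, ← norm_eq_zero, ← sq_eq_zero_iff]
    exact (Finset.sum_eq_zero_iff_of_nonneg fun n _ => sq_nonneg _).mp hzero.symm n
      (Finset.mem_univ n)
  rw [← covQ_projK hL2, hP, covQ_smul]
  simp

end Channel

variable {α β : Type*} [MeasurableSpace α] [MeasurableSpace β]

theorem not_maximizer_of_component_outside_chanSub_general
    (μ : Measure α) (ν : Measure β) [SigmaFinite μ] [SigmaFinite ν]
    (h : β → α → ℂ)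
    (hL2 : MemLp (Function.uncurry h) 2 (ν.prod μ))
    (σ2 : ℝ) (hσ2 : 0 < σ2) (Pmax : ℝ)
    {N : ℕ} (w : Fin N → Lp ℂ 2 μ)
    (hfeas : ∑ n, ‖w n‖ ^ 2 ≤ Pmax)
    (hQ0 : covQ h μ ν w ≠ 0)
    (hm : ∃ m, projK h μ (w m) ≠ w m) :
    ∃ w'' : Fin N → Lp ℂ 2 μ,
      (∑ n, ‖w'' n‖ ^ 2 ≤ Pmax) ∧ SE h μ ν σ2 w < SE h μ ν σ2 w'' := by
  set S := ∑ n, ‖projK h μ (w n)‖ ^ 2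
  have hS : 0 < S := sum_norm_sq_projK_pos hL2 hQ0
  have hSP : S < Pmax := (sum_norm_sq_projK_lt hm).trans_le hfeas
  set t := √(Pmax / S)
  have ht : t ^ 2 = Pmax / S := Real.sq_sqrt (div_pos (hS.trans hSP) hS).le
  refine ⟨fun n => (t : ℂ) • projK h μ (w n), le_of_eq ?_, ?_⟩
  · calc ∑ n, ‖(t : ℂ) • projK h μ (w n)‖ ^ 2 = t ^ 2 * S := by
          simp only [norm_smul, Complex.norm_real, Real.norm_eq_abs, mul_pow, sq_abs,
            Finset.mul_sum, S]
      _ = Pmax := by rw [ht, div_mul_cancel₀ _ hS.ne']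
  · refine SE_lt_SE_of_covQ_eq_smul hσ2 (posSemidef_covQ hL2 w) hQ0 ((one_lt_div hS).2 hSP) ?_
    rw [covQ_smul, covQ_projK hL2, Complex.norm_real, Real.norm_eq_abs, sq_abs, ht]

/-- A beamformer with a nonzero component outside the channel subspace is
strictly suboptimal whenever it delivers nonzero signal power: suppose `w = (w_1, …, w_N)`
is power-feasible (`Σ_n ‖w_n‖² ≤ P_max`), `Q(w) ≠ 0`, and `P_K w_m ≠ w_m` for some stream
`m`. Then `w` is not a maximizer of the spectral efficiency: there exists a power-feasible
beamformer `w''` (namely the projected beamformer rescaled by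
`t = √(P_max / Σ_n ‖P_K w_n‖²) > 1`) with `SE(w'') > SE(w)`. -/
theorem not_maximizer_of_component_outside_chanSub
    (μ : Measure α) (ν : Measure β) [SigmaFinite μ] [SigmaFinite ν]
    (h : β → α → ℂ)
    (hmeas : Measurable (Function.uncurry h))
    (hL2 : MemLp (Function.uncurry h) 2 (ν.prod μ))
    (σ2 : ℝ) (hσ2 : 0 < σ2) (Pmax : ℝ) (hPmax : 0 < Pmax)
    {N : ℕ} (w : Fin N → Lp ℂ 2 μ)
    (hfeas : ∑ n, ‖w n‖ ^ 2 ≤ Pmax)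
    (hQ0 : covQ h μ ν w ≠ 0)
    (hm : ∃ m, projK h μ (w m) ≠ w m) :
    ∃ w'' : Fin N → Lp ℂ 2 μ,
      (∑ n, ‖w'' n‖ ^ 2 ≤ Pmax) ∧ SE h μ ν σ2 w < SE h μ ν σ2 w'' :=
  not_maximizer_of_component_outside_chanSub_general μ ν h hL2 σ2 hσ2 Pmax w hfeas hQ0 hm
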